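/- Let A be an m×m matrix and B an n×n matrix over ZMod 2, and let C = Matrix.fromBlocks A 0 0 B. Define, for a square matrix M over ZMod 2 indexed by a finite type, the Zulli polynomial V(M) := ε(w(M)) • T(3·w(M)) * ⟨M⟩ in LaurentPolynomial ℤ, where w(M) is the writhe, ⟨M⟩ is the Zulli state sum, and ε(w) = 1 if w is even and −1 if w is odd (so that ε(w(M)) • T(3·w(M)) equals (−t³)^{w(M)}). Then V(C) = V(A) * V(B). -/

import Mathlib

open LaurentPolynomial

/-- The writhe of a square matrix over `ZMod 2`: the number of ones on the
diagonal minus the number of zeros on the diagonal, as an integer. -/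
def writhe {ι : Type*} [Fintype ι] (M : Matrix ι ι (ZMod 2)) : ℤ :=
  ((Finset.univ.filter fun i => M i i = 1).card : ℤ) -
    ((Finset.univ.filter fun i => M i i = 0).card : ℤ)

/-- The nullity over `ZMod 2` of a square matrix: the finrank of the kernel of
the linear map `x ↦ M.mulVec x`. -/
noncomputable def nullity {ι : Type*} [Fintype ι] (M : Matrix ι ι (ZMod 2)) : ℕ :=
  Module.finrank (ZMod 2) (LinearMap.ker M.mulVecLin)

/-- The Zulli state sum of a square matrix over `ZMod 2`, in Laurent polynomials
over `ℤ` (the variable `T 1` plays the role of `t^(1/4)`). -/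
noncomputable def stateSum {ι : Type*} [Fintype ι] [DecidableEq ι]
    (M : Matrix ι ι (ZMod 2)) : LaurentPolynomial ℤ :=
  ∑ S : Finset ι,
    T (2 * (S.card : ℤ) - (Fintype.card ι : ℤ)) *
      (-T (-2) - T 2) ^
        nullity (M + Matrix.diagonal (fun i => if i ∈ S then (1 : ZMod 2) else 0))

/-- The Zulli polynomial of a square matrix over `ZMod 2`:
`V(M) = ε(w(M)) • T(3 w(M)) * ⟨M⟩`, where `ε(w) = 1` if `w` is even and `-1`
otherwise, so that `ε(w(M)) • T(3 w(M)) = (-t³)^(w(M))`. -/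
noncomputable def zulliPoly {ι : Type*} [Fintype ι] [DecidableEq ι]
    (M : Matrix ι ι (ZMod 2)) : LaurentPolynomial ℤ :=
  (if Even (writhe M) then (1 : ℤ) else -1) • T (3 * writhe M) * stateSum M

lemma writhe_eq_sum {ι : Type*} [Fintype ι] (M : Matrix ι ι (ZMod 2)) :
    writhe M = ∑ i, (if M i i = 1 then (1 : ℤ) else -1) := by
  rw [writhe, Finset.sum_ite, Finset.sum_const, Finset.sum_const]
  have : (Finset.univ.filter fun i => ¬ M i i = 1) = Finset.univ.filter fun i => M i i = 0 := by
    apply Finset.filter_congr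
    intro i _
    have : ∀ x : ZMod 2, ¬ x = 1 ↔ x = 0 := by decide
    exact this _
  rw [this]
  ring

lemma writhe_fromBlocks {α β : Type*} [Fintype α] [Fintype β]
    (A : Matrix α α (ZMod 2)) (B : Matrix β β (ZMod 2)) :
    writhe (Matrix.fromBlocks A 0 0 B) = writhe A + writhe B := by
  rw [writhe_eq_sum, writhe_eq_sum, writhe_eq_sum, Fintype.sum_sum_type]
  simp [Matrix.fromBlocks]
  congr 1 <;> exact Finset.sum_congr rfl (fun _ _ => by congr)

lemma nullity_fromBlocks {α β : Type*} [Fintype α] [Fintype β]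
    (A : Matrix α α (ZMod 2)) (B : Matrix β β (ZMod 2)) :
    nullity (Matrix.fromBlocks A 0 0 B) = nullity A + nullity B := by
  have hmem : ∀ x : α ⊕ β → ZMod 2,
      x ∈ LinearMap.ker (Matrix.fromBlocks A 0 0 B).mulVecLin ↔
        (x ∘ Sum.inl) ∈ LinearMap.ker A.mulVecLin ∧
        (x ∘ Sum.inr) ∈ LinearMap.ker B.mulVecLin := by
    intro x
    simp only [LinearMap.mem_ker, Matrix.mulVecLin_apply, Matrix.fromBlocks_mulVec,
      Matrix.zero_mulVec, add_zero, zero_add]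
    constructor
    · intro h
      constructor
      · ext i; exact congrFun h (Sum.inl i)
      · ext i; exact congrFun h (Sum.inr i)
    · rintro ⟨h1, h2⟩
      ext i; cases i with
      | inl i => exact congrFun h1 i
      | inr i => exact congrFun h2 i
  let e : (LinearMap.ker (Matrix.fromBlocks A 0 0 B).mulVecLin) ≃ₗ[ZMod 2]
      (LinearMap.ker A.mulVecLin × LinearMap.ker B.mulVecLin) :=
    { toFun := fun x => (⟨x.1 ∘ Sum.inl, ((hmem x.1).1 x.2).1⟩,
        ⟨x.1 ∘ Sum.inr, ((hmem x.1).1 x.2).2⟩)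
      invFun := fun p => ⟨Sum.elim p.1.1 p.2.1, (hmem _).2 ⟨p.1.2, p.2.2⟩⟩
      map_add' := fun x y => rfl
      map_smul' := fun c x => rfl
      left_inv := fun x => by ext i; cases i <;> rfl
      right_inv := fun p => by ext i <;> rfl }
  rw [nullity, nullity, nullity, e.finrank_eq, Module.finrank_prod]

lemma toggle_fromBlocks {α β : Type*} [Fintype α] [Fintype β] [DecidableEq α] [DecidableEq β]
    (A : Matrix α α (ZMod 2)) (B : Matrix β β (ZMod 2)) (S₁ : Finset α) (S₂ : Finset β) :
    Matrix.fromBlocks A 0 0 B +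
        Matrix.diagonal (fun i => if i ∈ S₁.disjSum S₂ then (1 : ZMod 2) else 0)
      = Matrix.fromBlocks
          (A + Matrix.diagonal (fun i => if i ∈ S₁ then (1 : ZMod 2) else 0)) 0 0
          (B + Matrix.diagonal (fun i => if i ∈ S₂ then (1 : ZMod 2) else 0)) := by
  have hd : (Matrix.diagonal fun i : α ⊕ β => if i ∈ S₁.disjSum S₂ then (1 : ZMod 2) else 0)
      = Matrix.fromBlocks
          (Matrix.diagonal fun i => if i ∈ S₁ then (1 : ZMod 2) else 0) 0 0
          (Matrix.diagonal fun i => if i ∈ S₂ then (1 : ZMod 2) else 0) := by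
    ext i j
    cases i <;> cases j <;>
      simp [Matrix.diagonal_apply, Matrix.fromBlocks]
  rw [hd, Matrix.fromBlocks_add]
  simp

lemma stateSum_fromBlocks {α β : Type*} [Fintype α] [Fintype β] [DecidableEq α] [DecidableEq β]
    (A : Matrix α α (ZMod 2)) (B : Matrix β β (ZMod 2)) :
    stateSum (Matrix.fromBlocks A 0 0 B) = stateSum A * stateSum B := by
  classical
  have he : ∀ p : Finset α × Finset β, (p.1.disjSum p.2).card = p.1.card + p.2.card :=
    fun p => Finset.card_disjSum _ _
  rw [stateSum, stateSum, stateSum, Finset.sum_mul_sum, ← Fintype.sum_prod_type']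
  let e : Finset α × Finset β ≃ Finset (α ⊕ β) :=
    { toFun := fun p => p.1.disjSum p.2
      invFun := fun S => (S.toLeft, S.toRight)
      left_inv := fun p => by simp
      right_inv := fun S => by simp [Finset.toLeft_disjSum_toRight] }
  refine (Fintype.sum_equiv e _ _ ?_).symm
  intro p
  rw [show (e p : Finset (α ⊕ β)) = p.1.disjSum p.2 from rfl, toggle_fromBlocks,
    nullity_fromBlocks, he p, pow_add]
  have hc : (2 * ((p.1.card + p.2.card : ℕ) : ℤ) - (Fintype.card (α ⊕ β) : ℤ))
      = (2 * (p.1.card : ℤ) - (Fintype.card α : ℤ)) +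
        (2 * (p.2.card : ℤ) - (Fintype.card β : ℤ)) := by
    simp [Fintype.card_sum]
    ring
  rw [hc, T_add]
  ring

/-- The Zulli polynomial of a two-block diagonal matrix is the product of the
Zulli polynomials of the blocks: the trip-matrix form of the multiplicativity
of the Jones polynomial over connect sums. -/
theorem zulliPoly_fromBlocks {m n : ℕ}
    (A : Matrix (Fin m) (Fin m) (ZMod 2)) (B : Matrix (Fin n) (Fin n) (ZMod 2)) :
    zulliPoly (Matrix.fromBlocks A 0 0 B) = zulliPoly A * zulliPoly B := by
  rw [zulliPoly, zulliPoly, zulliPoly, writhe_fromBlocks, stateSum_fromBlocks]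
  have hε : (if Even (writhe A + writhe B) then (1 : ℤ) else -1)
      = (if Even (writhe A) then (1 : ℤ) else -1) * (if Even (writhe B) then (1 : ℤ) else -1) := by
    by_cases h1 : Even (writhe A) <;> by_cases h2 : Even (writhe B) <;>
      simp [Int.even_add, h1, h2]
  rw [hε, mul_add 3, T_add, zsmul_eq_mul, zsmul_eq_mul, zsmul_eq_mul]
  push_cast
  ring
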